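/- arXiv:1902.02818 — 3 statements merged into one kernel-verified Lean document; each statement's English description precedes it below -/
import Mathlib

section
/- Let α ∈ (0,1), λ ∈ ℂ, u₀ ∈ ℂ, and g ∈ L²(0,1). Define u(x) = u₀ E_{α+1}(λ x^{α+1}) − ∫₀ˣ (x−s)^α E_{α+1,α+1}(λ (x−s)^{α+1}) g(s) ds for x ∈ [0,1]. Then u is continuous on [0,1], u(0) = u₀, and u satisfies the integral equation u(x) = u₀ + λ (I^{α+1}u)(x) − (I^{α+1}g)(x) for every x ∈ [0,1]. -/
open MeasureTheory Set Filter

/-- Riemann–Liouville fractional integral `I^γ f` on `(0,1)` (complex-valued),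
with the convention `I⁰ f = f`. -/
noncomputable def fracInt (γ : ℝ) (f : ℝ → ℂ) (x : ℝ) : ℂ :=
  if γ = 0 then f x
  else ((Real.Gamma γ)⁻¹ : ℝ) • ∫ p in (0:ℝ)..x, (((x - p) ^ (γ - 1) : ℝ) : ℂ) * f p

/-- `f` is square integrable (and a.e. strongly measurable) on `(0,1)`: `f ∈ L²(0,1)`. -/
def SqIntOn (f : ℝ → ℂ) : Prop :=
  MeasureTheory.AEStronglyMeasurable f (MeasureTheory.volume.restrict (Set.Ioc (0:ℝ) 1)) ∧
  MeasureTheory.IntegrableOn (fun x => ‖f x‖ ^ 2) (Set.Ioc (0:ℝ) 1)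

/-- `(u, w)` lies in the graph of `A = (d/dx) D^α`:  `u` is absolutely continuous on `[0,1]`
with `u' = I^α w` a.e., `u(1) = 0`, and `w ∈ L²(0,1)`; then `A u = w`. -/
def InGraphA (α : ℝ) (u w : ℝ → ℂ) : Prop :=
  u 1 = 0 ∧ SqIntOn w ∧
  IntervalIntegrable (fracInt α w) MeasureTheory.volume 0 1 ∧
  ∀ x ∈ Set.Icc (0:ℝ) 1, u x = u 0 + ∫ t in (0:ℝ)..x, fracInt α w t

/-- Square of the `L²(0,1)` norm. -/
noncomputable def L2normSq (f : ℝ → ℂ) : ℝ := ∫ x in (0:ℝ)..1, ‖f x‖ ^ 2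

/-- Square of the Gagliardo seminorm of order `s` on `(0,1)`. -/
noncomputable def sobSeminormSq (s : ℝ) (u : ℝ → ℂ) : ℝ :=
  ∫ x in (0:ℝ)..1, ∫ y in (0:ℝ)..1, ‖u x - u y‖ ^ 2 / |x - y| ^ (1 + 2 * s)

/-- Square of the fractional Sobolev `H^s(0,1)` norm `N_s(u)`. -/
noncomputable def sobNormSq (s : ℝ) (u : ℝ → ℂ) : ℝ :=
  L2normSq u + sobSeminormSq s u

/-- The two-parameter Mittag-Leffler function E_{nu, mu}(z). -/
noncomputable def mittagLeffler (ν μ : ℝ) (z : ℂ) : ℂ :=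
  ∑' n : ℕ, z ^ n / ((Real.Gamma (μ + ν * n) : ℝ) : ℂ)

/-!
Put `c = α + 1`. For `d ≥ 1` the function `t ↦ t^(d-1) E_{c,d}(λ t^c)` is the power series
`∑ λⁿ t^(cn+d-1) / Γ(cn+d)`; the Beta integral `I^c [t^(b-1) / Γ(b)] = t^(c+b-1) / Γ(c+b)`,
applied termwise, shows that it solves `f = t^(d-1) / Γ(d) + λ I^c f`.
For `d = 1` this reads `λ I^c E = E - 1`, where `E(t) = E_c(λ t^c)`.
For `d = c` it reads `λ I^c K = K - t^(c-1) / Γ(c)` for the kernel `K` of the second term of `u`;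
since `I^c` commutes with the Volterra convolution `K ⋆ g` (Fubini on a triangle) and
`(t^(c-1) / Γ(c)) ⋆ g = I^c g`, this gives `λ I^c (K ⋆ g) = K ⋆ g - I^c g`.
The integral equation is the combination `u₀ · (first) - (second)`.
-/

open scoped Topology

theorem SqIntOn.integrableOn {g : ℝ → ℂ} (hg : SqIntOn g) : IntegrableOn g (Ioc 0 1) :=
  ((memLp_two_iff_integrable_sq_norm hg.1).2 hg.2).integrable one_le_two

theorem summable_pow_div_Gamma {c d r : ℝ} (hc : 1 ≤ c) (hd : 1 ≤ d) (hr : 0 ≤ r) :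
    Summable fun n : ℕ => r ^ n / Real.Gamma (c * n + d) := by
  rw [← summable_nat_add_iff 1]
  refine .of_nonneg_of_le (fun n => by positivity) (fun n => ?_)
    ((Real.summable_pow_div_factorial r).mul_left r)
  have hfac : (n.factorial : ℝ) ≤ Real.Gamma (c * ↑(n + 1) + d) := calc
    (n.factorial : ℝ) ≤ (n + 1).factorial := mod_cast Nat.factorial_le n.le_succ
    _ = Real.Gamma (↑(n + 1) + 1) := (Real.Gamma_nat_eq_factorial _).symm
    _ ≤ Real.Gamma (c * ↑(n + 1) + d) := by
      push_cast
      exact Real.Gamma_strictMonoOn_Ici.monotoneOn (by simp; linarith [n.cast_nonneg (α := ℝ)])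
        (by simp; nlinarith) (by nlinarith)
  rw [pow_succ', mul_div_assoc]
  gcongr

theorem mittagLeffler_zero (ν μ : ℝ) : mittagLeffler ν μ 0 = ((Real.Gamma μ : ℝ) : ℂ)⁻¹ := by
  rw [mittagLeffler, tsum_eq_single 0 fun n hn => by simp [hn]]
  simp

theorem fracInt_of_ne_zero {γ : ℝ} (hγ : γ ≠ 0) (f : ℝ → ℂ) (x : ℝ) :
    fracInt γ f x =
      (∫ p in (0 : ℝ)..x, (((x - p) ^ (γ - 1) : ℝ) : ℂ) * f p) / ((Real.Gamma γ : ℝ) : ℂ) := by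
  rw [fracInt, if_neg hγ, Complex.real_smul, Complex.ofReal_inv, inv_mul_eq_div]

theorem fracInt_congr {γ x : ℝ} {f₁ f₂ : ℝ → ℂ} (hx : 0 ≤ x) (h : EqOn f₁ f₂ (Icc 0 x)) :
    fracInt γ f₁ x = fracInt γ f₂ x := by
  unfold fracInt
  split_ifs
  · exact h ⟨hx, le_rfl⟩
  · congr 1
    refine intervalIntegral.integral_congr fun p hp => ?_
    rw [uIcc_of_le hx] at hp
    simp only [h hp]

theorem fracInt_const_mul (γ : ℝ) (a : ℂ) (f : ℝ → ℂ) (x : ℝ) :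
    fracInt γ (fun p => a * f p) x = a * fracInt γ f x := by
  unfold fracInt
  split_ifs
  · rfl
  · rw [mul_smul_comm, ← intervalIntegral.integral_const_mul]
    simp only [mul_left_comm a]

theorem continuous_ofReal_sub_rpow {e : ℝ} (he : 0 ≤ e) (x : ℝ) :
    Continuous fun p : ℝ => (((x - p) ^ e : ℝ) : ℂ) := by
  have := Real.continuous_rpow_const he
  fun_prop

theorem fracInt_sub {γ x : ℝ} (hγ : 1 ≤ γ) {f₁ f₂ : ℝ → ℂ}
    (h₁ : IntervalIntegrable f₁ volume 0 x) (h₂ : IntervalIntegrable f₂ volume 0 x) :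
    fracInt γ (fun p => f₁ p - f₂ p) x = fracInt γ f₁ x - fracInt γ f₂ x := by
  have hk := continuous_ofReal_sub_rpow (e := γ - 1) (by linarith) x
  simp only [fracInt_of_ne_zero (by linarith : γ ≠ 0), mul_sub, ← sub_div]
  rw [intervalIntegral.integral_sub (h₁.continuousOn_mul hk.continuousOn)
    (h₂.continuousOn_mul hk.continuousOn)]

theorem integral_sub_rpow_mul_rpow {a b x : ℝ} (ha : 0 < a) (hb : 0 < b) (hab : a + b ≠ 1)
    (hx : 0 ≤ x) :
    ∫ p in (0 : ℝ)..x, (((x - p) ^ (a - 1) : ℝ) : ℂ) * ((p ^ (b - 1) : ℝ) : ℂ) =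
      ((Real.Gamma a * Real.Gamma b / Real.Gamma (a + b) * x ^ (a + b - 1) : ℝ) : ℂ) := by
  rcases hx.eq_or_lt with rfl | hx
  · simp [Real.zero_rpow (sub_ne_zero.2 hab)]
  have hbeta : Complex.betaIntegral b a =
      Complex.Gamma b * Complex.Gamma a / Complex.Gamma (b + a) := by
    rw [Complex.Gamma_mul_Gamma_eq_betaIntegral (by simpa using hb) (by simpa using ha),
      mul_div_cancel_left₀]
    exact_mod_cast Complex.Gamma_ne_zero_of_re_pos (by simp; linarith)
  calc ∫ p in (0 : ℝ)..x, (((x - p) ^ (a - 1) : ℝ) : ℂ) * ((p ^ (b - 1) : ℝ) : ℂ)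
      = ∫ p in (0 : ℝ)..x, (p : ℂ) ^ ((b : ℂ) - 1) * ((x : ℂ) - p) ^ ((a : ℂ) - 1) := by
        refine intervalIntegral.integral_congr fun p hp => ?_
        rw [uIcc_of_le hx.le] at hp
        rw [Complex.ofReal_cpow (sub_nonneg.2 hp.2), Complex.ofReal_cpow hp.1]
        push_cast
        ring
    _ = _ := by
        rw [Complex.betaIntegral_scaled _ _ hx, hbeta,
          show (b : ℂ) + a - 1 = ((a + b - 1 : ℝ) : ℂ) by push_cast; ring,
          show (b : ℂ) + a = ((a + b : ℝ) : ℂ) by push_cast; ring, ← Complex.ofReal_cpow hx.le]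
        simp only [Complex.Gamma_ofReal]
        push_cast
        ring

section MittagLefflerKernel

variable (c d : ℝ) (lam : ℂ)

noncomputable def mlTerm (n : ℕ) (t : ℝ) : ℂ :=
  lam ^ n * ((t ^ (c * n + d - 1) : ℝ) : ℂ) / ((Real.Gamma (c * n + d) : ℝ) : ℂ)

/-- `t ↦ t ^ (d - 1) * E_{c,d}(lam * t ^ c)` on `[0, 1]`, extended to `ℝ` by its values at the
endpoints, so that it is continuous and bounded on the whole line. -/
noncomputable def mlKernel (t : ℝ) : ℂ :=
  ∑' n : ℕ, mlTerm c d lam n (projIcc 0 1 zero_le_one t)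

variable {c d}

theorem mlTerm_succ (n : ℕ) (t : ℝ) :
    mlTerm c d lam (n + 1) t = lam * mlTerm c (c + d) lam n t := by
  simp only [mlTerm]
  rw [show c * ↑(n + 1) + d = c * n + (c + d) by push_cast; ring, pow_succ']
  ring

theorem norm_mlTerm_le (hc : 0 ≤ c) (hd : 1 ≤ d) (n : ℕ) {t : ℝ} (ht : t ∈ Icc (0 : ℝ) 1) :
    ‖mlTerm c d lam n t‖ ≤ ‖lam‖ ^ n / Real.Gamma (c * n + d) := by
  have hΓ : 0 < Real.Gamma (c * n + d) := Real.Gamma_pos_of_pos (by positivity)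
  have hpow : t ^ (c * n + d - 1) ≤ 1 := Real.rpow_le_one ht.1 ht.2 (by nlinarith)
  rw [mlTerm, norm_div, norm_mul, norm_pow, Complex.norm_real, Complex.norm_real,
    Real.norm_of_nonneg hΓ.le, Real.norm_of_nonneg (Real.rpow_nonneg ht.1 _)]
  gcongr
  exact mul_le_of_le_one_right (by positivity) hpow

theorem continuous_mlTerm (hc : 0 ≤ c) (hd : 1 ≤ d) (n : ℕ) : Continuous (mlTerm c d lam n) := by
  unfold mlTerm
  fun_prop (disch := nlinarith)

theorem summable_mlTerm (hc : 1 ≤ c) (hd : 1 ≤ d) {t : ℝ} (ht : t ∈ Icc (0 : ℝ) 1) :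
    Summable fun n => mlTerm c d lam n t :=
  .of_norm_bounded (summable_pow_div_Gamma hc hd (norm_nonneg lam))
    fun n => norm_mlTerm_le lam (by linarith) hd n ht

theorem mlKernel_of_mem {t : ℝ} (ht : t ∈ Icc (0 : ℝ) 1) :
    mlKernel c d lam t = ∑' n : ℕ, mlTerm c d lam n t := by
  simp [mlKernel, projIcc_of_mem _ ht]

theorem continuous_mlKernel (hc : 1 ≤ c) (hd : 1 ≤ d) : Continuous (mlKernel c d lam) :=
  continuous_tsum
    (fun n => (continuous_mlTerm lam (by linarith) hd n).comp
      (continuous_subtype_val.comp continuous_projIcc))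
    (summable_pow_div_Gamma hc hd (norm_nonneg lam))
    fun n t => norm_mlTerm_le lam (by linarith) hd n (projIcc 0 1 zero_le_one t).2

theorem mlKernel_eq_add_mlKernel (hc : 1 ≤ c) (hd : 1 ≤ d) {t : ℝ} (ht : t ∈ Icc (0 : ℝ) 1) :
    mlKernel c d lam t =
      ((t ^ (d - 1) : ℝ) : ℂ) / ((Real.Gamma d : ℝ) : ℂ) + lam * mlKernel c (c + d) lam t := by
  rw [mlKernel_of_mem lam ht, mlKernel_of_mem lam ht,
    (summable_mlTerm lam hc hd ht).tsum_eq_zero_add, ← tsum_mul_left]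
  simp only [← mlTerm_succ]
  simp [mlTerm]

theorem mlKernel_eq_mittagLeffler (hc : 0 ≤ c) (hd : 1 ≤ d) {t : ℝ} (ht : t ∈ Icc (0 : ℝ) 1) :
    mlKernel c d lam t =
      ((t ^ (d - 1) : ℝ) : ℂ) * mittagLeffler c d (lam * ((t ^ c : ℝ) : ℂ)) := by
  rw [mlKernel_of_mem lam ht, mittagLeffler, ← tsum_mul_left]
  refine tsum_congr fun n => ?_
  rw [mlTerm, mul_pow, ← Complex.ofReal_pow, ← Real.rpow_natCast, ← Real.rpow_mul ht.1,
    show c * n + d - 1 = d - 1 + c * n by ring, add_comm d,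
    Real.rpow_add_of_nonneg ht.1 (by linarith) (by positivity)]
  push_cast
  ring

theorem integral_mul_mlTerm (hc : 0 < c) (hd : 1 ≤ d) (n : ℕ) {y : ℝ} (hy : 0 ≤ y) :
    ∫ t in (0 : ℝ)..y, (((y - t) ^ (c - 1) : ℝ) : ℂ) * mlTerm c d lam n t =
      ((Real.Gamma c : ℝ) : ℂ) * mlTerm c (c + d) lam n y := by
  have hb : 0 < c * n + d := by positivity
  have hΓ : ((Real.Gamma (c * n + d) : ℝ) : ℂ) ≠ 0 := mod_cast (Real.Gamma_pos_of_pos hb).ne'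
  have hΓ' : ((Real.Gamma (c * n + (c + d)) : ℝ) : ℂ) ≠ 0 :=
    mod_cast (Real.Gamma_pos_of_pos (by positivity)).ne'
  have hterm : (fun t => (((y - t) ^ (c - 1) : ℝ) : ℂ) * mlTerm c d lam n t) = fun t =>
      lam ^ n / ((Real.Gamma (c * n + d) : ℝ) : ℂ) *
        ((((y - t) ^ (c - 1) : ℝ) : ℂ) * ((t ^ (c * n + d - 1) : ℝ) : ℂ)) := by
    ext t; simp only [mlTerm]; ring
  rw [hterm, intervalIntegral.integral_const_mul,
    integral_sub_rpow_mul_rpow hc hb (by nlinarith [n.cast_nonneg (α := ℝ)]) hy, mlTerm,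
    show c + (c * n + d) = c * n + (c + d) by ring]
  push_cast
  field_simp

theorem fracInt_mlKernel (hc : 1 ≤ c) (hd : 1 ≤ d) {y : ℝ} (hy : y ∈ Icc (0 : ℝ) 1) :
    fracInt c (mlKernel c d lam) y = mlKernel c (c + d) lam y := by
  have hΓ : ((Real.Gamma c : ℝ) : ℂ) ≠ 0 := mod_cast (Real.Gamma_pos_of_pos (by linarith)).ne'
  have hsum : HasSum
      (fun n => ∫ t in (0 : ℝ)..y, (((y - t) ^ (c - 1) : ℝ) : ℂ) * mlTerm c d lam n t)
      (∫ t in (0 : ℝ)..y, (((y - t) ^ (c - 1) : ℝ) : ℂ) * mlKernel c d lam t) := by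
    refine intervalIntegral.hasSum_integral_of_dominated_convergence
      (fun n _ => ‖lam‖ ^ n / Real.Gamma (c * n + d)) (fun n => ?_) (fun n => ?_)
      (.of_forall fun _ _ => summable_pow_div_Gamma hc hd (norm_nonneg lam))
      intervalIntegrable_const (.of_forall fun t ht => ?_)
    · exact (continuous_ofReal_sub_rpow (by linarith) y).aestronglyMeasurable.mul
        (continuous_mlTerm lam (by linarith) hd n).aestronglyMeasurable
    · refine .of_forall fun t ht => ?_
      rw [uIoc_of_le hy.1] at ht
      have hpow : ‖(y - t) ^ (c - 1)‖ ≤ 1 := by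
        rw [Real.norm_of_nonneg (Real.rpow_nonneg (by linarith [ht.2]) _)]
        exact Real.rpow_le_one (by linarith [ht.2]) (by linarith [ht.1, hy.2]) (by linarith)
      rw [norm_mul, Complex.norm_real]
      exact (mul_le_of_le_one_left (norm_nonneg _) hpow).trans
        (norm_mlTerm_le lam (by linarith) hd n ⟨ht.1.le, ht.2.trans hy.2⟩)
    · rw [uIoc_of_le hy.1] at ht
      have ht' : t ∈ Icc (0 : ℝ) 1 := ⟨ht.1.le, ht.2.trans hy.2⟩
      rw [mlKernel_of_mem lam ht']
      exact (summable_mlTerm lam hc hd ht').hasSum.mul_left _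
  simp only [integral_mul_mlTerm lam (by linarith : 0 < c) hd _ hy.1] at hsum
  rw [fracInt_of_ne_zero (by linarith), ← hsum.tsum_eq, tsum_mul_left,
    mul_div_cancel_left₀ _ hΓ, mlKernel_of_mem lam hy]

theorem mlKernel_eq_add_fracInt (hc : 1 ≤ c) (hd : 1 ≤ d) {t : ℝ} (ht : t ∈ Icc (0 : ℝ) 1) :
    mlKernel c d lam t =
      ((t ^ (d - 1) : ℝ) : ℂ) / ((Real.Gamma d : ℝ) : ℂ) +
        lam * fracInt c (mlKernel c d lam) t := by
  rw [fracInt_mlKernel lam hc hd ht, mlKernel_eq_add_mlKernel lam hc hd ht]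

end MittagLefflerKernel

noncomputable def volterraConv (K g : ℝ → ℂ) (x : ℝ) : ℂ :=
  ∫ s in (0 : ℝ)..x, K (x - s) * g s

theorem continuousOn_volterraConv {K g : ℝ → ℂ} {T : ℝ} (hK : Continuous K)
    (hg : IntervalIntegrable g volume 0 T) : ContinuousOn (volterraConv K g) (Icc 0 T) := by
  obtain ⟨B, hB⟩ :=
    (isCompact_Icc (a := -T) (b := T)).exists_bound_of_continuousOn hK.continuousOn
  let F : ℝ → ℝ → ℂ := fun y => {s | s ≤ y}.indicator fun s => K (y - s) * g s
  have hF : ∀ y ∈ Icc 0 T, volterraConv K g y = ∫ s in (0 : ℝ)..T, F y s := fun y hy =>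
    (intervalIntegral.integral_indicator hy).symm
  intro x hx
  rw [ContinuousWithinAt, hF x hx]
  refine tendsto_nhdsWithin_congr (fun y hy => (hF y hy).symm) ?_
  apply intervalIntegral.tendsto_integral_filter_of_dominated_convergence (fun s => B * ‖g s‖)
  · exact .of_forall fun y =>
      ((hK.comp (continuous_const.sub continuous_id)).aestronglyMeasurable.mul
        hg.def'.aestronglyMeasurable).indicator measurableSet_Iic
  · filter_upwards [self_mem_nhdsWithin] with y hy
    refine .of_forall fun s hs => (norm_indicator_le_norm_self _ _).trans ?_
    rw [uIoc_of_le (hx.1.trans hx.2)] at hs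
    rw [norm_mul]
    exact mul_le_mul_of_nonneg_right (hB _ ⟨by linarith [hy.1, hs.2], by linarith [hy.2, hs.1]⟩)
      (norm_nonneg _)
  · exact hg.norm.const_mul B
  -- `F y s` is continuous in `y` away from the jump at `y = s`.
  · filter_upwards [measure_singleton x |> compl_mem_ae_iff.2] with s (hs : s ≠ x) _
    have hcont : Tendsto (fun y => K (y - s) * g s) (𝓝[Icc 0 T] x) (𝓝 (K (x - s) * g s)) :=
      ((hK.comp (continuous_id.sub continuous_const)).mul continuous_const).continuousWithinAt
    rcases hs.lt_or_gt with hlt | hgt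
    · have hF_eq : ∀ᶠ y in 𝓝[Icc 0 T] x, K (y - s) * g s = F y s := by
        filter_upwards [nhdsWithin_le_nhds (Ioi_mem_nhds hlt)] with y (hy : s < y)
        simp [F, hy.le]
      rwa [show F x s = K (x - s) * g s by simp [F, hlt.le], ← tendsto_congr' hF_eq]
    · have hF_eq : ∀ᶠ y in 𝓝[Icc 0 T] x, 0 = F y s := by
        filter_upwards [nhdsWithin_le_nhds (Iio_mem_nhds hgt)] with y (hy : y < s)
        simp [F, hy]
      rw [show F x s = 0 by simp [F, hgt], ← tendsto_congr' hF_eq]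
      exact tendsto_const_nhds

theorem integral_integral_swap_triangle {k : ℝ → ℝ → ℂ} (hk : Continuous (Function.uncurry k))
    {g : ℝ → ℂ} {x : ℝ} (hx : 0 ≤ x) (hg : IntervalIntegrable g volume 0 x) :
    ∫ p in (0 : ℝ)..x, ∫ s in (0 : ℝ)..p, k p s * g s =
      ∫ s in (0 : ℝ)..x, (∫ p in s..x, k p s) * g s := by
  set μ := volume.restrict (Ioc (0 : ℝ) x)
  have hgμ : Integrable g μ := (intervalIntegrable_iff_integrableOn_Ioc_of_le hx).1 hg
  obtain ⟨B, hB⟩ := (isCompact_Icc.prod isCompact_Icc).exists_bound_of_continuousOn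
    (hk.continuousOn (s := Icc (0 : ℝ) x ×ˢ Icc (0 : ℝ) x))
  let Φ : ℝ × ℝ → ℂ := fun q => if q.2 ≤ q.1 then k q.1 q.2 * g q.2 else 0
  have hΦ : Integrable Φ (μ.prod μ) := by
    refine Integrable.mono' ((hgμ.norm.const_mul B).comp_snd μ) ?_ ?_
    · have : Φ = {q : ℝ × ℝ | q.2 ≤ q.1}.indicator fun q => k q.1 q.2 * g q.2 := by
        ext q; simp [Φ, indicator_apply]
      rw [this]
      exact (hk.aestronglyMeasurable.mul hgμ.aestronglyMeasurable.comp_snd).indicator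
        (measurableSet_le measurable_snd measurable_fst)
    · have hmem : ∀ᵐ q ∂μ.prod μ, q ∈ Ioc (0 : ℝ) x ×ˢ Ioc (0 : ℝ) x := by
        rw [Measure.prod_restrict]
        exact ae_restrict_mem (measurableSet_Ioc.prod measurableSet_Ioc)
      filter_upwards [hmem] with q ⟨hp, hs⟩
      by_cases hsp : q.2 ≤ q.1
      · simp only [Φ, if_pos hsp, norm_mul]
        exact mul_le_mul_of_nonneg_right (hB q ⟨Ioc_subset_Icc_self hp, Ioc_subset_Icc_self hs⟩)
          (norm_nonneg _)
      · simp only [Φ, if_neg hsp, norm_zero]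
        exact mul_nonneg ((norm_nonneg _).trans (hB (0, 0) (by simp [hx]))) (norm_nonneg _)
  have hleft : ∀ p ∈ Ioc (0 : ℝ) x, ∫ s in (0 : ℝ)..p, k p s * g s = ∫ s, Φ (p, s) ∂μ := by
    intro p hp
    rw [← intervalIntegral.integral_of_le hx, ← intervalIntegral.integral_indicator
      ⟨hp.1.le, hp.2⟩]
    simp [Φ, indicator_apply]
  have hright : ∀ s ∈ Ioc (0 : ℝ) x, (∫ p in s..x, k p s) * g s = ∫ p, Φ (p, s) ∂μ := by
    intro s hs
    have hΦs : (fun p => Φ (p, s)) = (Ici s).indicator fun p => k p s * g s := by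
      ext p; simp [Φ, indicator_apply]
    have hinter : Ioc 0 x ∩ Ici s = Icc s x := by
      ext p; simp only [mem_inter_iff, mem_Ioc, mem_Ici, mem_Icc]
      exact ⟨fun h => ⟨h.2, h.1.2⟩, fun h => ⟨⟨hs.1.trans_le h.1, h.2⟩, h.1⟩⟩
    rw [hΦs, setIntegral_indicator measurableSet_Ici, hinter, integral_Icc_eq_integral_Ioc,
      ← intervalIntegral.integral_of_le hs.2, intervalIntegral.integral_mul_const]
  rw [intervalIntegral.integral_of_le hx, intervalIntegral.integral_of_le hx,
    setIntegral_congr_fun measurableSet_Ioc hleft, setIntegral_congr_fun measurableSet_Ioc hright]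
  exact integral_integral_swap hΦ

theorem fracInt_volterraConv {γ : ℝ} (hγ : 1 ≤ γ) {K g : ℝ → ℂ} (hK : Continuous K) {x : ℝ}
    (hx : 0 ≤ x) (hg : IntervalIntegrable g volume 0 x) :
    fracInt γ (volterraConv K g) x = volterraConv (fracInt γ K) g x := by
  have hk : Continuous
      (Function.uncurry fun p s => (((x - p) ^ (γ - 1) : ℝ) : ℂ) * K (p - s)) :=
    ((continuous_ofReal_sub_rpow (by linarith) x).comp continuous_fst).mul
      (hK.comp (continuous_fst.sub continuous_snd))
  have hshift : ∀ s, ∫ p in s..x, (((x - p) ^ (γ - 1) : ℝ) : ℂ) * K (p - s) =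
      ∫ t in (0 : ℝ)..x - s, (((x - s - t) ^ (γ - 1) : ℝ) : ℂ) * K t := fun s => by
    simpa only [sub_sub_sub_cancel_right, sub_self] using
      intervalIntegral.integral_comp_sub_right
        (fun t => (((x - s - t) ^ (γ - 1) : ℝ) : ℂ) * K t) s (a := s) (b := x)
  simp only [volterraConv, fracInt_of_ne_zero (by linarith : γ ≠ 0),
    ← intervalIntegral.integral_const_mul, ← mul_assoc, integral_integral_swap_triangle hk hx hg,
    hshift, div_mul_eq_mul_div,
    intervalIntegral.integral_div]

theorem mul_fracInt_volterraConv_mlKernel {c : ℝ} (hc : 1 ≤ c) (lam : ℂ) {g : ℝ → ℂ} {x : ℝ}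
    (hx : x ∈ Icc (0 : ℝ) 1) (hg : IntervalIntegrable g volume 0 x) :
    lam * fracInt c (volterraConv (mlKernel c c lam) g) x =
      volterraConv (mlKernel c c lam) g x - fracInt c g x := by
  have hK := continuous_mlKernel lam hc hc
  have hk := continuous_ofReal_sub_rpow (e := c - 1) (by linarith) x
  rw [fracInt_volterraConv hc hK hx.1 hg, fracInt_of_ne_zero (by linarith), volterraConv,
    volterraConv, ← intervalIntegral.integral_const_mul, ← intervalIntegral.integral_div,
    ← intervalIntegral.integral_sub
      (hg.continuousOn_mul
        (by fun_prop : Continuous fun s => mlKernel c c lam (x - s)).continuousOn)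
      ((hg.continuousOn_mul hk.continuousOn).div_const _)]
  refine intervalIntegral.integral_congr fun s hs => ?_
  rw [uIcc_of_le hx.1] at hs
  have hK_eq := mlKernel_eq_add_fracInt lam hc hc (t := x - s)
    ⟨by linarith [hs.2], by linarith [hs.1, hx.2]⟩
  linear_combination -(g s) * hK_eq

noncomputable def mlSolution (c : ℝ) (lam u₀ : ℂ) (g : ℝ → ℂ) (x : ℝ) : ℂ :=
  u₀ * mlKernel c 1 lam x - volterraConv (mlKernel c c lam) g x

section MittagLefflerSolution

variable {c : ℝ} (lam u₀ : ℂ) {g : ℝ → ℂ}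

theorem continuousOn_mlSolution (hc : 1 ≤ c) (hg : IntervalIntegrable g volume 0 1) :
    ContinuousOn (mlSolution c lam u₀ g) (Icc 0 1) :=
  (continuous_const.mul (continuous_mlKernel lam hc le_rfl)).continuousOn.sub
    (continuousOn_volterraConv (continuous_mlKernel lam hc hc) hg)

theorem mlSolution_eq_add_fracInt (hc : 1 ≤ c) (hg : IntervalIntegrable g volume 0 1) {x : ℝ}
    (hx : x ∈ Icc (0 : ℝ) 1) :
    mlSolution c lam u₀ g x = u₀ + lam * fracInt c (mlSolution c lam u₀ g) x - fracInt c g x := by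
  have hgx : IntervalIntegrable g volume 0 x := hg.mono_set (by
    rw [uIcc_of_le hx.1, uIcc_of_le zero_le_one]; exact Icc_subset_Icc le_rfl hx.2)
  have hfracE : lam * fracInt c (mlKernel c 1 lam) x = mlKernel c 1 lam x - 1 := by
    rw [mlKernel_eq_add_fracInt lam hc le_rfl hx]
    simp
  have hfracV := mul_fracInt_volterraConv_mlKernel hc lam hx hgx
  have hfrac : fracInt c (mlSolution c lam u₀ g) x =
      u₀ * fracInt c (mlKernel c 1 lam) x - fracInt c (volterraConv (mlKernel c c lam) g) x := by
    rw [show mlSolution c lam u₀ g = fun p => u₀ * mlKernel c 1 lam p -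
        volterraConv (mlKernel c c lam) g p from rfl, fracInt_sub hc, fracInt_const_mul]
    · exact (continuous_const.mul (continuous_mlKernel lam hc le_rfl)).intervalIntegrable 0 x
    · exact ((continuousOn_volterraConv (continuous_mlKernel lam hc hc) hg).mono
        (Icc_subset_Icc le_rfl hx.2)).intervalIntegrable_of_Icc hx.1
  rw [hfrac, mlSolution]
  linear_combination hfracV - u₀ * hfracE

end MittagLefflerSolution

/-- the Mittag-Leffler representation solves the integral equation
u = u0 + lam I^{a+1} u - I^{a+1} g on [0,1]. -/
theorem statement_5 (α : ℝ) (hα : α ∈ Set.Ioo (0:ℝ) 1) (lam : ℂ) (u₀ : ℂ)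
    (g : ℝ → ℂ) (hg : SqIntOn g) (u : ℝ → ℂ)
    (hu : ∀ x ∈ Set.Icc (0:ℝ) 1,
      u x = u₀ * mittagLeffler (α + 1) 1 (lam * ((x ^ (α + 1) : ℝ) : ℂ)) -
        ∫ s in (0:ℝ)..x, (((x - s) ^ α : ℝ) : ℂ) *
          mittagLeffler (α + 1) (α + 1) (lam * (((x - s) ^ (α + 1) : ℝ) : ℂ)) * g s) :
    ContinuousOn u (Set.Icc (0:ℝ) 1) ∧ u 0 = u₀ ∧
      ∀ x ∈ Set.Icc (0:ℝ) 1,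
        u x = u₀ + lam * fracInt (α + 1) u x - fracInt (α + 1) g x := by
  set c := α + 1
  have hc : 1 ≤ c := by linarith [hα.1]
  have hg1 : IntervalIntegrable g volume 0 1 :=
    (intervalIntegrable_iff_integrableOn_Ioc_of_le zero_le_one).2 hg.integrableOn
  have hrepr : EqOn u (mlSolution c lam u₀ g) (Icc 0 1) := by
    intro x hx
    rw [hu x hx, mlSolution, mlKernel_eq_mittagLeffler lam (by linarith) le_rfl hx, volterraConv,
      sub_self, Real.rpow_zero, Complex.ofReal_one, one_mul]
    congr 1
    refine intervalIntegral.integral_congr fun s hs => ?_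
    rw [uIcc_of_le hx.1] at hs
    rw [mlKernel_eq_mittagLeffler lam (by linarith) hc
        ⟨by linarith [hs.2], by linarith [hs.1, hx.2]⟩,
      show c - 1 = α by ring]
  refine ⟨(continuousOn_mlSolution lam u₀ hc hg1).congr hrepr, ?_, fun x hx => ?_⟩
  · simp [hu 0 ⟨le_rfl, zero_le_one⟩, Real.zero_rpow (by linarith : c ≠ 0), mittagLeffler_zero]
  · rw [hrepr hx, fracInt_congr hx.1 (hrepr.mono (Icc_subset_Icc le_rfl hx.2))]
    exact mlSolution_eq_add_fracInt lam u₀ hc hg1 hx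
end

section
/- Let L > 0 and α, β ∈ (0,1) with α + β ≤ 1, and let u : [0,L] → ℝ be absolutely continuous. Then ∂^α D^β u = D^{α+β} u; concretely, for a.e. x ∈ (0,L) the function y ↦ (I^{1−α}(I^{1−β}u′))(y) is differentiable at x with derivative equal to (I^{1−α−β}u′)(x) (with the convention I⁰f = f, so that for α + β = 1 the derivative equals u′(x)). -/
/-!
For `a + b ≥ 1` the Riemann–Liouville integrals compose exactly, at every point:
`I^a (I^b f) = I^(a+b) f`. This is Fubini on the triangle `0 < q < p < y`, the inner integral
being the Beta integral `∫_q^y (y - p)^(a-1) (p - q)^(b-1) dp = B(a, b) (y - q)^(a+b-1)`.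
With `a = 1 - α`, `b = 1 - β` and `c = 1 - α - β ≥ 0` this gives
`I^(1-α) I^(1-β) u' = I^(1+c) u' = I^1 (I^c u')`, an indefinite integral of the integrable
function `I^c u'`, and the Lebesgue differentiation theorem differentiates it almost everywhere.
-/

open MeasureTheory Set Filter

/-- Riemann–Liouville fractional integral of order gamma on (0, L) (real-valued),
with the convention that the integral of order 0 is the identity. -/
noncomputable def fracIntR (γ : ℝ) (f : ℝ → ℝ) (x : ℝ) : ℝ :=
  if γ = 0 then f x
  else (Real.Gamma γ)⁻¹ * ∫ p in (0:ℝ)..x, (x - p) ^ (γ - 1) * f p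

open ProbabilityTheory

lemma integral_sub_rpow_mul_sub_rpow {a b q y : ℝ} (ha : 0 < a) (hb : 0 < b) (hqy : q < y) :
    ∫ p in q..y, (y - p) ^ (a - 1) * (p - q) ^ (b - 1) = beta a b * (y - q) ^ (a + b - 1) := by
  have hr : 0 < y - q := sub_pos.2 hqy
  have hshift : ∫ p in q..y, (y - p) ^ (a - 1) * (p - q) ^ (b - 1)
      = ∫ x in 0..y - q, (y - q - x) ^ (a - 1) * x ^ (b - 1) := by
    simpa [sub_sub_sub_cancel_right] using
      intervalIntegral.integral_comp_sub_right (fun x => (y - q - x) ^ (a - 1) * x ^ (b - 1)) q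
        (a := q) (b := y)
  have hC := Complex.betaIntegral_scaled b a hr
  rw [Complex.betaIntegral_symm, Complex.betaIntegral_eq_Gamma_mul_div _ _ (by simpa) (by simpa)]
    at hC
  have hcast : ∀ x ∈ uIcc 0 (y - q), (((y - q - x) ^ (a - 1) * x ^ (b - 1) : ℝ) : ℂ)
      = (x : ℂ) ^ ((b : ℂ) - 1) * (((y - q : ℝ) : ℂ) - x) ^ ((a : ℂ) - 1) := by
    intro x hx
    rw [uIcc_of_le hr.le] at hx
    push_cast
    rw [Complex.ofReal_cpow hx.1, Complex.ofReal_cpow (by linarith [hx.2])]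
    push_cast
    ring
  apply Complex.ofReal_injective
  rw [hshift, ← intervalIntegral.integral_ofReal, intervalIntegral.integral_congr hcast, hC, beta,
    Complex.ofReal_mul, Complex.ofReal_cpow hr.le, Complex.ofReal_div, Complex.ofReal_mul,
    ← Complex.Gamma_ofReal, ← Complex.Gamma_ofReal, ← Complex.Gamma_ofReal]
  push_cast
  ring_nf

lemma intervalIntegrable_sub_rpow_mul_sub_rpow {a b q y : ℝ} (ha : 0 < a) (hb : 0 < b)
    (hqy : q < y) :
    IntervalIntegrable (fun p => (y - p) ^ (a - 1) * (p - q) ^ (b - 1)) volume q y := by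
  -- a nonzero interval integral can only come from an integrable function
  by_contra h
  have := (intervalIntegral.integral_undef h).symm.trans (integral_sub_rpow_mul_sub_rpow ha hb hqy)
  exact (mul_pos (beta_pos ha hb) (Real.rpow_pos_of_pos (sub_pos.2 hqy) _)).ne' this.symm

lemma setIntegral_Ioc_ite_lt_const {a b c : ℝ} (hac : a ≤ c) (hcb : c ≤ b) (g : ℝ → ℝ) :
    ∫ x in Ioc a b, (if x < c then g x else 0) = ∫ x in a..c, g x := by
  have hset : Ioc a b ∩ Iio c = Ioo a c := by
    ext x
    simp only [mem_inter_iff, mem_Ioc, mem_Iio, mem_Ioo]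
    exact ⟨fun h => ⟨h.1.1, h.2⟩, fun h => ⟨⟨h.1, h.2.le.trans hcb⟩, h.2⟩⟩
  simp_rw [← mem_Iio, ← indicator_apply]
  rw [setIntegral_indicator measurableSet_Iio, hset, ← integral_Ioc_eq_integral_Ioo,
    intervalIntegral.integral_of_le hac]

lemma setIntegral_Ioc_ite_const_lt {a b c : ℝ} (hac : a ≤ c) (hcb : c ≤ b) (g : ℝ → ℝ) :
    ∫ x in Ioc a b, (if c < x then g x else 0) = ∫ x in c..b, g x := by
  simp_rw [← mem_Ioi, ← indicator_apply]
  rw [setIntegral_indicator measurableSet_Ioi, Ioc_inter_Ioi, sup_eq_right.2 hac,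
    intervalIntegral.integral_of_le hcb]

section Triangle

variable {a b y : ℝ} {f : ℝ → ℝ}

/-- The integrand of `∫₀ʸ (y - p)^(a-1) ∫₀ᵖ (p - q)^(b-1) f q dq dp` on the triangle `q < p`. -/
noncomputable def triangleIntegrand (a b y : ℝ) (f : ℝ → ℝ) (p q : ℝ) : ℝ :=
  if q < p then (y - p) ^ (a - 1) * ((p - q) ^ (b - 1) * f q) else 0

lemma integral_triangleIntegrand_fst {p : ℝ} (hp : p ∈ Ioc 0 y) :
    ∫ q in Ioc 0 y, triangleIntegrand a b y f p q
      = (y - p) ^ (a - 1) * ∫ q in 0..p, (p - q) ^ (b - 1) * f q := by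
  simp only [triangleIntegrand]
  rw [setIntegral_Ioc_ite_lt_const hp.1.le hp.2, intervalIntegral.integral_const_mul]

lemma integral_triangleIntegrand_snd (ha : 0 < a) (hb : 0 < b) {q : ℝ} (hq : q ∈ Ioo 0 y) :
    ∫ p in Ioc 0 y, triangleIntegrand a b y f p q = beta a b * (y - q) ^ (a + b - 1) * f q := by
  simp_rw [triangleIntegrand, ← mul_assoc]
  rw [setIntegral_Ioc_ite_const_lt hq.1.le hq.2.le, intervalIntegral.integral_mul_const,
    integral_sub_rpow_mul_sub_rpow ha hb hq.2]

lemma norm_triangleIntegrand {p q : ℝ} (hp : p ≤ y) :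
    ‖triangleIntegrand a b y f p q‖ = triangleIntegrand a b y (fun x => |f x|) p q := by
  by_cases hqp : q < p
  · simp only [triangleIntegrand, if_pos hqp, norm_mul, Real.norm_eq_abs,
      abs_of_nonneg (Real.rpow_nonneg (sub_nonneg.2 hp) _),
      abs_of_nonneg (Real.rpow_nonneg (sub_nonneg.2 hqp.le) _)]
  · simp [triangleIntegrand, hqp]

lemma integrable_triangleIntegrand_snd (ha : 0 < a) (hb : 0 < b) {q : ℝ} (hq : q ∈ Ioo 0 y) :
    Integrable (fun p => triangleIntegrand a b y f p q) (volume.restrict (Ioc 0 y)) := by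
  have hind : (fun p => triangleIntegrand a b y f p q)
      = (Ioi q).indicator fun p => (y - p) ^ (a - 1) * (p - q) ^ (b - 1) * f q := by
    ext p
    simp [triangleIntegrand, indicator_apply, mul_assoc]
  rw [hind, integrable_indicator_iff measurableSet_Ioi, IntegrableOn,
    Measure.restrict_restrict measurableSet_Ioi, inter_comm, Ioc_inter_Ioi, sup_eq_right.2 hq.1.le]
  exact ((intervalIntegrable_sub_rpow_mul_sub_rpow ha hb hq.2).mul_const (f q)).1

lemma aestronglyMeasurable_triangleIntegrand {μ ν : Measure ℝ} (hf : AEStronglyMeasurable f ν) :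
    AEStronglyMeasurable (Function.uncurry (triangleIntegrand a b y f)) (μ.prod ν) := by
  have hind : Function.uncurry (triangleIntegrand a b y f) = {z : ℝ × ℝ | z.2 < z.1}.indicator
      fun z => (y - z.1) ^ (a - 1) * ((z.1 - z.2) ^ (b - 1) * f z.2) := by
    ext ⟨p, q⟩
    simp [triangleIntegrand, indicator_apply]
  rw [hind]
  refine AEStronglyMeasurable.indicator ?_ (measurableSet_lt measurable_snd measurable_fst)
  exact (by fun_prop : Measurable fun z : ℝ × ℝ => (y - z.1) ^ (a - 1)).aestronglyMeasurable.mul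
    ((by fun_prop : Measurable fun z : ℝ × ℝ => (z.1 - z.2) ^ (b - 1)).aestronglyMeasurable.mul
      hf.comp_snd)

lemma ae_restrict_Ioc_mem_Ioo (y : ℝ) : ∀ᵐ q ∂(volume.restrict (Ioc 0 y)), q ∈ Ioo 0 y := by
  filter_upwards [ae_restrict_mem measurableSet_Ioc, ae_restrict_of_ae (volume.ae_ne y)]
    with q hq hqy
  exact ⟨hq.1, lt_of_le_of_ne hq.2 hqy⟩

/-- `1 ≤ a + b` keeps the weight `(y - q)^(a+b-1)` bounded, which is what makes Fubini apply. -/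
lemma integrable_triangleIntegrand (ha : 0 < a) (hb : 0 < b) (hab : 1 ≤ a + b)
    (hf : IntegrableOn f (Ioc 0 y)) :
    Integrable (Function.uncurry (triangleIntegrand a b y f))
      ((volume.restrict (Ioc 0 y)).prod (volume.restrict (Ioc 0 y))) := by
  refine (integrable_prod_iff' (aestronglyMeasurable_triangleIntegrand hf.1)).2 ⟨?_, ?_⟩
  · filter_upwards [ae_restrict_Ioc_mem_Ioo y] with q hq
    exact integrable_triangleIntegrand_snd ha hb hq
  have hnorm : (fun q => ∫ p in Ioc 0 y, ‖triangleIntegrand a b y f p q‖)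
      =ᵐ[volume.restrict (Ioc 0 y)] fun q => beta a b * (y - q) ^ (a + b - 1) * |f q| := by
    filter_upwards [ae_restrict_Ioc_mem_Ioo y] with q hq
    rw [← integral_triangleIntegrand_snd (f := fun x => |f x|) ha hb hq]
    exact setIntegral_congr_fun measurableSet_Ioc fun p hp => norm_triangleIntegrand hp.2
  refine Integrable.congr ?_ hnorm.symm
  have hcont : ContinuousOn (fun q => beta a b * (y - q) ^ (a + b - 1)) (Icc 0 y) :=
    (continuous_const.mul ((continuous_const.sub continuous_id).rpow_const
      fun _ => Or.inr (by linarith))).continuousOn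
  have hfI : IntegrableOn f (Icc 0 y) := by rwa [integrableOn_Icc_iff_integrableOn_Ioc]
  exact (IntegrableOn.continuousOn_mul hcont hfI.norm isCompact_Icc).mono_set Ioc_subset_Icc_self

theorem integral_rpow_mul_integral_rpow (ha : 0 < a) (hb : 0 < b) (hab : 1 ≤ a + b)
    (hy : 0 ≤ y) (hf : IntegrableOn f (Ioc 0 y)) :
    ∫ p in 0..y, (y - p) ^ (a - 1) * ∫ q in 0..p, (p - q) ^ (b - 1) * f q
      = beta a b * ∫ q in 0..y, (y - q) ^ (a + b - 1) * f q := by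
  have hsnd : ∀ᵐ q ∂(volume.restrict (Ioc 0 y)),
      ∫ p in Ioc 0 y, triangleIntegrand a b y f p q = beta a b * ((y - q) ^ (a + b - 1) * f q) := by
    filter_upwards [ae_restrict_Ioc_mem_Ioo y] with q hq
    rw [integral_triangleIntegrand_snd ha hb hq, mul_assoc]
  rw [intervalIntegral.integral_of_le hy, intervalIntegral.integral_of_le hy,
    ← integral_const_mul,
    ← setIntegral_congr_fun measurableSet_Ioc fun p hp => integral_triangleIntegrand_fst hp,
    integral_integral_swap (integrable_triangleIntegrand ha hb hab hf), integral_congr_ae hsnd]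

theorem integrableOn_rpow_mul_integral_rpow (ha : 0 < a) (hb : 0 < b) (hab : 1 ≤ a + b)
    (hf : IntegrableOn f (Ioc 0 y)) :
    IntegrableOn (fun p => (y - p) ^ (a - 1) * ∫ q in 0..p, (p - q) ^ (b - 1) * f q)
      (Ioc 0 y) := by
  refine (integrable_triangleIntegrand ha hb hab hf).integral_prod_left.congr ?_
  filter_upwards [ae_restrict_mem measurableSet_Ioc] with p hp
  exact integral_triangleIntegrand_fst hp

end Triangle

lemma fracIntR_zero (f : ℝ → ℝ) : fracIntR 0 f = f :=
  funext fun _ => if_pos rfl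

lemma fracIntR_one (f : ℝ → ℝ) (x : ℝ) : fracIntR 1 f x = ∫ p in 0..x, f p := by
  simp [fracIntR]

lemma fracIntR_of_pos {γ : ℝ} (hγ : 0 < γ) (f : ℝ → ℝ) (x : ℝ) :
    fracIntR γ f x = (Real.Gamma γ)⁻¹ * ∫ p in 0..x, (x - p) ^ (γ - 1) * f p :=
  if_neg hγ.ne'

theorem fracIntR_fracIntR {a b y : ℝ} {f : ℝ → ℝ} (ha : 0 < a) (hb : 0 ≤ b) (hab : 1 ≤ a + b)
    (hy : 0 ≤ y) (hf : IntegrableOn f (Ioc 0 y)) :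
    fracIntR a (fracIntR b f) y = fracIntR (a + b) f y := by
  rcases hb.eq_or_lt with rfl | hb
  · rw [fracIntR_zero, add_zero]
  simp_rw [fracIntR_of_pos ha, fracIntR_of_pos hb, fracIntR_of_pos (add_pos ha hb),
    mul_left_comm _ (Real.Gamma b)⁻¹, intervalIntegral.integral_const_mul,
    integral_rpow_mul_integral_rpow ha hb hab hy hf, beta]
  have := (Real.Gamma_pos_of_pos ha).ne'
  have := (Real.Gamma_pos_of_pos hb).ne'
  field_simp

theorem intervalIntegrable_fracIntR {c L : ℝ} {f : ℝ → ℝ} (hc : 0 ≤ c) (hL : 0 ≤ L)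
    (hf : IntervalIntegrable f volume 0 L) : IntervalIntegrable (fracIntR c f) volume 0 L := by
  rcases hc.eq_or_lt with rfl | hc
  · rwa [fracIntR_zero]
  rw [intervalIntegrable_iff_integrableOn_Ioc_of_le hL] at hf ⊢
  have := (integrableOn_rpow_mul_integral_rpow one_pos hc (by linarith) hf).const_mul
    (Real.Gamma c)⁻¹
  simp_rw [sub_self, Real.rpow_zero, one_mul] at this
  rwa [show fracIntR c f = _ from funext (fracIntR_of_pos hc f)]

theorem statement_13_general (L α β : ℝ) (hL : 0 < L) (hα : α ∈ Set.Ioo (0:ℝ) 1)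
    (hβ : β ∈ Set.Ioo (0:ℝ) 1) (hαβ : α + β ≤ 1)
    (u' : ℝ → ℝ) (hu' : IntervalIntegrable u' MeasureTheory.volume 0 L) :
    ∀ᵐ x ∂(MeasureTheory.volume.restrict (Set.Ioo (0:ℝ) L)),
      HasDerivAt (fun y => fracIntR (1 - α) (fracIntR (1 - β) u') y)
        (fracIntR (1 - α - β) u' x) x := by
  have hc : 0 ≤ 1 - α - β := by linarith
  have hu'I : IntegrableOn u' (Ioc 0 L) :=
    (intervalIntegrable_iff_integrableOn_Ioc_of_le hL.le).1 hu'
  have hI := (intervalIntegrable_fracIntR hc hL.le hu').ae_hasDerivAt_integral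
  filter_upwards [ae_restrict_of_ae hI, ae_restrict_mem measurableSet_Ioo] with x hx hxL
  have hxI : x ∈ uIcc 0 L := uIcc_of_le hL.le ▸ Ioo_subset_Icc_self hxL
  refine (hx hxI 0 left_mem_uIcc).congr_of_eventuallyEq ?_
  filter_upwards [isOpen_Ioo.mem_nhds hxL] with y hy
  have hu'y : IntegrableOn u' (Ioc 0 y) := hu'I.mono_set (Ioc_subset_Ioc_right hy.2.le)
  calc fracIntR (1 - α) (fracIntR (1 - β) u') y = fracIntR (1 + (1 - α - β)) u' y := by
        rw [fracIntR_fracIntR (by linarith [hα.2]) (by linarith [hβ.2]) (by linarith) hy.1.le hu'y,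
          show 1 - α + (1 - β) = 1 + (1 - α - β) by ring]
    _ = ∫ t in 0..y, fracIntR (1 - α - β) u' t := by
        rw [← fracIntR_fracIntR one_pos hc (by linarith) hy.1.le hu'y, fracIntR_one]

/-- composition rule d^a D^b u = D^{a+b} u for an absolutely continuous u:
for a.e. x in (0, L), y -> I^{1-a}(I^{1-b} u')(y) is differentiable at x with
derivative I^{1-a-b} u'(x) (with the convention that the fractional integral of
order 0 is the identity). -/
theorem statement_13 (L α β : ℝ) (hL : 0 < L) (hα : α ∈ Set.Ioo (0:ℝ) 1)
    (hβ : β ∈ Set.Ioo (0:ℝ) 1) (hαβ : α + β ≤ 1)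
    (u u' : ℝ → ℝ) (hu' : IntervalIntegrable u' MeasureTheory.volume 0 L)
    (hu : ∀ x ∈ Set.Icc (0:ℝ) L, u x = u 0 + ∫ t in (0:ℝ)..x, u' t) :
    ∀ᵐ x ∂(MeasureTheory.volume.restrict (Set.Ioo (0:ℝ) L)),
      HasDerivAt (fun y => fracIntR (1 - α) (fracIntR (1 - β) u') y)
        (fracIntR (1 - α - β) u' x) x :=
  statement_13_general L α β hL hα hβ hαβ u' hu'
end

section
/- Let α ∈ (0,1), L > 0, and let f : [0,L] → ℝ be absolutely continuous. Then for a.e. x ∈ (0,L), (D^α f)(x) · f(x) ≥ (1/2) (D^α f²)(x); concretely, (I^{1−α}f′)(x) · f(x) ≥ (I^{1−α}(f f′))(x) for a.e. x ∈ (0,L). -/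
/-!
Fix `x` and put `w p = (x - p) ^ (-α)`, `G p = ∫ t in p..x, f' t`, so that `f x - f p = G p` and the
claim at `x` becomes `0 ≤ ∫ p in 0..x, w p * (f' p * G p)`. Since `-f' * G` is the a.e. derivative
of `G ^ 2 / 2` and `w p = x ^ (-α) + ∫ s in 0..p, α * (x - s) ^ (-α - 1)` with a nonnegative
integrand, Fubini turns this integral into
`x ^ (-α) * G 0 ^ 2 / 2 + ∫ s in 0..x, α * (x - s) ^ (-α - 1) * G s ^ 2 / 2 ≥ 0`.
The weighted integrals exist for a.e. `x`, being a convolution of two integrable functions.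
-/

open MeasureTheory Set Filter

theorem integral_mul_integral_eq_sq_div_two {g : ℝ → ℝ} {a b : ℝ}
    (hg : IntervalIntegrable g volume a b) :
    ∫ p in a..b, g p * ∫ t in p..b, g t = (∫ t in a..b, g t) ^ 2 / 2 := by
  set F : ℝ → ℝ := fun p => ∫ t in a..p, g t
  have hF : AbsolutelyContinuousOnInterval F a b :=
    hg.absolutelyContinuousOnInterval_intervalIntegral left_mem_uIcc
  have hsq : ∫ p in a..b, g p * F p + F p * g p = F b ^ 2 := by
    have h := hF.integral_deriv_mul_eq_sub hF
    rw [show F a = 0 from intervalIntegral.integral_same, mul_zero, sub_zero, ← sq] at h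
    rw [← h]
    refine intervalIntegral.integral_congr_ae ?_
    filter_upwards [hg.ae_hasDerivAt_integral] with p hp hpab
    rw [(hp (uIoc_subset_uIcc hpab) a left_mem_uIcc).deriv]
  have hgF : IntervalIntegrable (fun p => g p * F p) volume a b :=
    hg.mul_continuousOn hF.continuousOn
  have htail : EqOn (fun p => g p * ∫ t in p..b, g t) (fun p => g p * F b - g p * F p)
      (uIcc a b) := fun p hp => by
    simp only [F, ← intervalIntegral.integral_interval_sub_left hg
      (hg.mono_set (uIcc_subset_uIcc_left hp))]
    ring
  rw [intervalIntegral.integral_congr htail, intervalIntegral.integral_sub (hg.mul_const _) hgF,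
    intervalIntegral.integral_mul_const]
  rw [intervalIntegral.integral_add hgF (by simpa only [mul_comm] using hgF)] at hsq
  simp only [mul_comm (F _) (g _)] at hsq
  linear_combination -hsq / 2

theorem integral_primitive_mul_eq_integral_mul_integral {u v : ℝ → ℝ} {a b : ℝ}
    (hu_meas : AEStronglyMeasurable u (volume.restrict (Ioc a b)))
    (hu_nonneg : ∀ s ∈ Ioc a b, 0 ≤ u s)
    (hu : ∀ p ∈ Ioo a b, IntegrableOn u (Ioc a p))
    (hv_meas : AEStronglyMeasurable v (volume.restrict (Ioc a b)))
    (huv : IntegrableOn (fun p => (∫ s in Ioc a p, u s) * v p) (Ioc a b)) :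
    ∫ p in Ioc a b, (∫ s in Ioc a p, u s) * v p = ∫ s in Ioc a b, u s * ∫ p in Ioc s b, v p := by
  set μ := volume.restrict (Ioc a b)
  let F : ℝ → ℝ → ℝ := fun s p => {z : ℝ × ℝ | z.1 ≤ z.2}.indicator (fun z => u z.1 * v z.2) (s, p)
  have hF_left : ∀ s p, F s p = (Iic p).indicator (fun s => u s * v p) s := fun s p => by
    simp [F, indicator_apply]
  have hF_right : ∀ s p, F s p = (Ici s).indicator (fun p => u s * v p) p := fun s p => by
    simp [F, indicator_apply]
  have hμ_Iic : ∀ p ∈ Ioc a b, μ.restrict (Iic p) = volume.restrict (Ioc a p) := fun p hp => by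
    rw [Measure.restrict_restrict measurableSet_Iic, inter_comm, Ioc_inter_Iic,
      inf_eq_right.2 hp.2]
  have hμ_Ici : ∀ s ∈ Ioc a b, μ.restrict (Ici s) = volume.restrict (Ioc s b) := fun s hs => by
    rw [Measure.restrict_restrict measurableSet_Ici, Measure.restrict_congr_set Ioc_ae_eq_Icc]
    congr 1
    ext p
    exact ⟨fun ⟨h1, _, h2⟩ => ⟨h1, h2⟩, fun ⟨h1, h2⟩ => ⟨h1, hs.1.trans_le h1, h2⟩⟩
  have hFm : AEStronglyMeasurable (Function.uncurry F) (μ.prod μ) :=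
    (hu_meas.comp_fst.mul hv_meas.comp_snd).indicator
      (measurableSet_le measurable_fst measurable_snd)
  have hFi : Integrable (Function.uncurry F) (μ.prod μ) := by
    refine (integrable_prod_iff' hFm).2 ⟨?_, huv.norm.congr ?_⟩
    · have hIoo : ∀ᵐ p ∂μ, p ∈ Ioo a b := by
        rw [show μ = volume.restrict (Ioo a b) from Measure.restrict_congr_set Ioo_ae_eq_Ioc.symm]
        exact ae_restrict_mem measurableSet_Ioo
      filter_upwards [hIoo] with p hp
      change Integrable (fun s => F s p) μ
      simp_rw [hF_left]
      rw [integrable_indicator_iff measurableSet_Iic, IntegrableOn,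
        hμ_Iic p (Ioo_subset_Ioc_self hp)]
      exact (hu p hp).mul_const _
    · filter_upwards [ae_restrict_mem measurableSet_Ioc] with p hp
      change _ = ∫ s, ‖F s p‖ ∂μ
      have hup : ∀ s ∈ Ioc a p, 0 ≤ u s := fun s hs => hu_nonneg s ⟨hs.1, hs.2.trans hp.2⟩
      simp_rw [hF_left, norm_indicator_eq_indicator_norm]
      rw [integral_indicator measurableSet_Iic, hμ_Iic p hp, norm_mul,
        Real.norm_of_nonneg (setIntegral_nonneg measurableSet_Ioc hup), ← integral_mul_const]
      refine setIntegral_congr_fun measurableSet_Ioc fun s hs => ?_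
      rw [norm_mul, Real.norm_of_nonneg (hup s hs)]
  calc ∫ p in Ioc a b, (∫ s in Ioc a p, u s) * v p = ∫ p, ∫ s, F s p ∂μ ∂μ := by
        refine setIntegral_congr_fun measurableSet_Ioc fun p hp => ?_
        simp_rw [hF_left]
        rw [integral_indicator measurableSet_Iic, hμ_Iic p hp, integral_mul_const]
    _ = ∫ s, ∫ p, F s p ∂μ ∂μ := (integral_integral_swap hFi).symm
    _ = ∫ s in Ioc a b, u s * ∫ p in Ioc s b, v p := by
        refine setIntegral_congr_fun measurableSet_Ioc fun s hs => ?_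
        simp_rw [hF_right]
        rw [integral_indicator measurableSet_Ici, hμ_Ici s hs, integral_const_mul]

theorem integral_mul_mul_integral_nonneg {u w g : ℝ → ℝ} {a b c : ℝ} (hab : a ≤ b) (hc : 0 ≤ c)
    (hu_meas : AEStronglyMeasurable u (volume.restrict (Ioc a b)))
    (hu_nonneg : ∀ s ∈ Ioc a b, 0 ≤ u s) (hu : ∀ p ∈ Ioo a b, IntegrableOn u (Ioc a p))
    (hw : ∀ p ∈ Ioo a b, w p = c + ∫ s in Ioc a p, u s)
    (hg : IntervalIntegrable g volume a b) (hwg : IntegrableOn (fun p => w p * g p) (Ioc a b)) :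
    0 ≤ ∫ p in a..b, w p * (g p * ∫ t in p..b, g t) := by
  set v : ℝ → ℝ := fun p => g p * ∫ t in p..b, g t
  have hG : ContinuousOn (fun p => ∫ t in p..b, g t) (Icc a b) := by
    simpa only [uIcc_of_le hab] using intervalIntegral.continuousOn_primitive_interval_left
      ((intervalIntegrable_iff' (μ := volume)).1 hg)
  have hg' : IntegrableOn g (Ioc a b) := (intervalIntegrable_iff_integrableOn_Ioc_of_le hab).1 hg
  have hv : IntegrableOn v (Ioc a b) :=
    hg'.mul_continuousOn_of_subset hG measurableSet_Ioc isCompact_Icc Ioc_subset_Icc_self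
  have hwv : IntegrableOn (fun p => w p * v p) (Ioc a b) := by
    simpa only [v, mul_assoc] using
      hwg.mul_continuousOn_of_subset hG measurableSet_Ioc isCompact_Icc Ioc_subset_Icc_self
  have hsplit : ∀ p ∈ Ioo a b, w p * v p = c * v p + (∫ s in Ioc a p, u s) * v p :=
    fun p hp => by rw [hw p hp]; ring
  have huv : IntegrableOn (fun p => (∫ s in Ioc a p, u s) * v p) (Ioc a b) := by
    rw [integrableOn_Ioc_iff_integrableOn_Ioo]
    refine ((hwv.sub (hv.const_mul c)).mono_set Ioo_subset_Ioc_self).congr_fun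
      (fun p hp => ?_) measurableSet_Ioo
    simp only [Pi.sub_apply, hsplit p hp]
    ring
  have hv_nonneg : ∀ s ∈ Icc a b, 0 ≤ ∫ p in s..b, v p := fun s hs => by
    rw [integral_mul_integral_eq_sq_div_two
      (hg.mono_set (uIcc_subset_uIcc_right (Icc_subset_uIcc hs)))]
    positivity
  rw [intervalIntegral.integral_of_le hab, setIntegral_congr_set Ioo_ae_eq_Ioc.symm,
    setIntegral_congr_fun measurableSet_Ioo hsplit, setIntegral_congr_set Ioo_ae_eq_Ioc,
    integral_add (hv.const_mul c) huv, integral_const_mul,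
    integral_primitive_mul_eq_integral_mul_integral hu_meas hu_nonneg hu
      hv.aestronglyMeasurable huv]
  refine add_nonneg (mul_nonneg hc ?_) (setIntegral_nonneg measurableSet_Ioc fun s hs => ?_)
  · rw [← intervalIntegral.integral_of_le hab]
    exact hv_nonneg a ⟨le_rfl, hab⟩
  · refine mul_nonneg (hu_nonneg s hs) ?_
    rw [← intervalIntegral.integral_of_le hs.2]
    exact hv_nonneg s ⟨hs.1.le, hs.2⟩

theorem continuousOn_mul_sub_rpow (β γ x : ℝ) :
    ContinuousOn (fun s => β * (x - s) ^ γ) (Iio x) :=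
  continuousOn_const.mul ((continuousOn_const.sub continuousOn_id).rpow_const
    fun _ hs => Or.inl (sub_pos.2 hs).ne')

theorem integral_mul_rpow_sub_neg_sub_one {α x a p : ℝ} (ha : a < x) (hp : p < x) :
    ∫ s in a..p, α * (x - s) ^ (-α - 1) = (x - p) ^ (-α) - (x - a) ^ (-α) := by
  have hlt : ∀ s ∈ uIcc a p, s < x := fun s hs => (max_lt ha hp).trans_le' hs.2
  have hderiv : ∀ s ∈ uIcc a p,
      HasDerivAt (fun s => (x - s) ^ (-α)) (α * (x - s) ^ (-α - 1)) s := fun s hs => by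
    convert ((hasDerivAt_id' s).const_sub x).rpow_const (p := -α)
      (Or.inl (sub_pos.2 (hlt s hs)).ne') using 1
    ring
  exact intervalIntegral.integral_eq_sub_of_hasDerivAt hderiv
    ((continuousOn_mul_sub_rpow α (-α - 1) x).mono hlt).intervalIntegrable

theorem integral_rpow_mul_mul_integral_nonneg {α x : ℝ} {g : ℝ → ℝ} (hα : 0 < α) (hx : 0 < x)
    (hg : IntervalIntegrable g volume 0 x)
    (hK : IntegrableOn (fun p => (x - p) ^ (-α) * g p) (Ioc 0 x)) :
    0 ≤ ∫ p in 0..x, (x - p) ^ (-α) * (g p * ∫ t in p..x, g t) := by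
  refine integral_mul_mul_integral_nonneg hx.le (Real.rpow_nonneg hx.le (-α))
    (by fun_prop : Measurable fun s => α * (x - s) ^ (-α - 1)).aestronglyMeasurable
    (fun s hs => mul_nonneg hα.le (Real.rpow_nonneg (sub_nonneg.2 hs.2) _))
    (fun p hp => ?_) (fun p hp => ?_) hg hK
  · have hcont := (continuousOn_mul_sub_rpow α (-α - 1) x).mono
      fun s (hs : s ∈ Icc 0 p) => hs.2.trans_lt hp.2
    exact hcont.integrableOn_Icc.mono_set Ioc_subset_Icc_self
  · rw [← intervalIntegral.integral_of_le hp.1.le, integral_mul_rpow_sub_neg_sub_one hx hp.2,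
      sub_zero]
    ring

theorem integral_rpow_mul_mul_deriv_le {α x : ℝ} {f f' : ℝ → ℝ} (hα : 0 < α) (hx : 0 < x)
    (hf' : IntervalIntegrable f' volume 0 x)
    (hf : ∀ p ∈ Icc 0 x, f p = f 0 + ∫ t in 0..p, f' t)
    (hK : IntegrableOn (fun p => (x - p) ^ (-α) * f' p) (Ioc 0 x)) :
    ∫ p in 0..x, (x - p) ^ (-α) * (f p * f' p) ≤ (∫ p in 0..x, (x - p) ^ (-α) * f' p) * f x := by
  have hf_cont : ContinuousOn f (Icc 0 x) := by
    have h := (continuousOn_const (c := f 0)).add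
      (intervalIntegral.continuousOn_primitive_interval' hf' left_mem_uIcc)
    rw [uIcc_of_le hx.le] at h
    exact h.congr hf
  have hKf : IntegrableOn (fun p => (x - p) ^ (-α) * (f p * f' p)) (Ioc 0 x) := by
    refine (hK.mul_continuousOn_of_subset hf_cont measurableSet_Ioc isCompact_Icc
      Ioc_subset_Icc_self).congr_fun (fun p _ => by ring) measurableSet_Ioc
  have hdiff : ∀ p ∈ Icc 0 x, f x - f p = ∫ t in p..x, f' t := fun p hp => by
    rw [hf x ⟨hx.le, le_rfl⟩, hf p hp, add_sub_add_left_eq_sub,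
      intervalIntegral.integral_interval_sub_left hf'
        (hf'.mono_set (uIcc_subset_uIcc_left (Icc_subset_uIcc hp)))]
  have hKx : IntervalIntegrable (fun p => (x - p) ^ (-α) * f' p * f x) volume 0 x :=
    (intervalIntegrable_iff_integrableOn_Ioc_of_le hx.le).2 (hK.mul_const _)
  have hKfx : IntervalIntegrable (fun p => (x - p) ^ (-α) * (f p * f' p)) volume 0 x :=
    (intervalIntegrable_iff_integrableOn_Ioc_of_le hx.le).2 hKf
  rw [← intervalIntegral.integral_mul_const, ← sub_nonneg,
    ← intervalIntegral.integral_sub hKx hKfx]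
  convert integral_rpow_mul_mul_integral_nonneg hα hx hf' hK using 1
  refine intervalIntegral.integral_congr fun p hp => ?_
  rw [← hdiff p (by rwa [uIcc_of_le hx.le] at hp)]
  ring

theorem ae_integrableOn_mul_comp_sub {k g : ℝ → ℝ} {L : ℝ} (hk : IntegrableOn k (Ioc 0 L))
    (hg : IntegrableOn g (Ioc 0 L)) :
    ∀ᵐ x, x ≤ L → IntegrableOn (fun p => k (x - p) * g p) (Ioc 0 x) := by
  have hconv := ((integrable_indicator_iff measurableSet_Ioc).2 hg).ae_convolution_exists
    (ContinuousLinearMap.mul ℝ ℝ) ((integrable_indicator_iff measurableSet_Ioc).2 hk)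
  filter_upwards [hconv] with x hx hxL
  rw [integrableOn_Ioc_iff_integrableOn_Ioo]
  refine hx.integrableOn.congr_fun (fun p hp => ?_) measurableSet_Ioo
  have hp' : p ∈ Ioc 0 L := ⟨hp.1, hp.2.le.trans hxL⟩
  have hxp : x - p ∈ Ioc 0 L := ⟨sub_pos.2 hp.2, by linarith [hp.1]⟩
  simp [indicator_of_mem hp', indicator_of_mem hxp, mul_comm]

theorem statement_14_general (α L : ℝ) (hα : α ∈ Set.Ioo (0:ℝ) 1)
    (f f' : ℝ → ℝ) (hf' : IntervalIntegrable f' MeasureTheory.volume 0 L)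
    (hf : ∀ x ∈ Set.Icc (0:ℝ) L, f x = f 0 + ∫ t in (0:ℝ)..x, f' t) :
    ∀ᵐ x ∂(MeasureTheory.volume.restrict (Set.Ioo (0:ℝ) L)),
      fracIntR (1 - α) (fun s => f s * f' s) x ≤ fracIntR (1 - α) f' x * f x := by
  obtain ⟨hα0, hα1⟩ := hα
  have hk : IntegrableOn (fun t => t ^ (-α)) (Ioc 0 L) :=
    (intervalIntegral.intervalIntegrable_rpow' (by linarith)).1
  filter_upwards [ae_restrict_of_ae (ae_integrableOn_mul_comp_sub hk hf'.1),
    ae_restrict_mem measurableSet_Ioo] with x hK hx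
  have hΓ : 0 ≤ (Real.Gamma (1 - α))⁻¹ := inv_nonneg.2 (Real.Gamma_pos_of_pos (by linarith)).le
  simp only [fracIntR, if_neg (sub_ne_zero.2 hα1.ne'), sub_sub_cancel_left, mul_assoc]
  exact mul_le_mul_of_nonneg_left (integral_rpow_mul_mul_deriv_le hα0 hx.1
    (hf'.mono_set (uIcc_subset_uIcc_left (Ioo_subset_Icc_self hx |> Icc_subset_uIcc)))
    (fun p hp => hf p ⟨hp.1, hp.2.trans hx.2.le⟩) (hK hx.2.le)) hΓ

/-- the pointwise Alikhanov-type inequality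
(D^a f)(x) f(x) >= (1/2)(D^a f^2)(x) a.e., i.e.
(I^{1-a} f')(x) f(x) >= (I^{1-a}(f f'))(x) a.e. on (0, L), for f absolutely
continuous on [0, L] with integrable a.e. derivative f'. -/
theorem statement_14 (α L : ℝ) (hα : α ∈ Set.Ioo (0:ℝ) 1) (hL : 0 < L)
    (f f' : ℝ → ℝ) (hf' : IntervalIntegrable f' MeasureTheory.volume 0 L)
    (hf : ∀ x ∈ Set.Icc (0:ℝ) L, f x = f 0 + ∫ t in (0:ℝ)..x, f' t) :
    ∀ᵐ x ∂(MeasureTheory.volume.restrict (Set.Ioo (0:ℝ) L)),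
      fracIntR (1 - α) (fun s => f s * f' s) x ≤ fracIntR (1 - α) f' x * f x :=
  statement_14_general α L hα f f' hf' hf
end
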